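/- Let H be a Horton set (in x-order) with even part H⁺ and odd part H⁻, where H⁻ is itself a Horton set with parts (H⁻)⁺ and (H⁻)⁻. If h_a <_x h_b are points of H⁻ with exactly one point of H⁻ strictly between them in x-coordinate, then for any point h_c ∈ H⁺, the triangle h_a h_b h_c contains at most 1 point of H in its interior. -/

import Mathlib

open scoped Classical

noncomputable section

/-- A planar point set is in general position if no three distinct points are collinear. -/
def GenPos (S : Set (ℝ × ℝ)) : Prop :=
  ∀ p ∈ S, ∀ q ∈ S, ∀ r ∈ S, p ≠ q → p ≠ r → q ≠ r →
    ¬ Collinear ℝ ({p, q, r} : Set (ℝ × ℝ))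

/-- Number of points of `S` strictly inside the triangle `a b c`. -/
def triPts (S : Finset (ℝ × ℝ)) (a b c : ℝ × ℝ) : ℕ :=
  (S.filter (fun p => p ∈ interior (convexHull ℝ ({a, b, c} : Set (ℝ × ℝ))))).card

/-- `S` (colored by `χ`) contains a monochromatic triangle with at most `s` interior points. -/
def MonoTriangle {c : ℕ} (S : Finset (ℝ × ℝ)) (χ : ℝ × ℝ → Fin c) (s : ℕ) : Prop :=
  ∃ a ∈ S, ∃ b ∈ S, ∃ d ∈ S, a ≠ b ∧ a ≠ d ∧ b ≠ d ∧
    χ a = χ b ∧ χ b = χ d ∧ triPts S a b d ≤ s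
/-- The elements at even positions (0-based: positions 0,2,4,…) of a list. -/
def everyOther : List (ℝ × ℝ) → List (ℝ × ℝ)
  | [] => []
  | [a] => [a]
  | a :: _ :: l => a :: everyOther l

/-- A list of points sorted by strictly increasing x-coordinate. -/
def SortedX (l : List (ℝ × ℝ)) : Prop := l.Pairwise (fun p q => p.1 < q.1)

/-- `p` lies strictly above the (non-vertical) line through `a` and `b`. -/
def AboveLine (a b p : ℝ × ℝ) : Prop :=
  a.2 + (b.2 - a.2) / (b.1 - a.1) * (p.1 - a.1) < p.2

/-- `p` lies strictly below the (non-vertical) line through `a` and `b`. -/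
def BelowLine (a b p : ℝ × ℝ) : Prop :=
  p.2 < a.2 + (b.2 - a.2) / (b.1 - a.1) * (p.1 - a.1)

/-- Horton sets, as lists sorted by x-coordinate. For a list `l`, the odd points
`H⁻` are `everyOther l` (1-indexed positions 1,3,5,…) and the even points `H⁺` are
`everyOther l.tail` (positions 2,4,6,…). Both parts are recursively Horton, every
line through two points of `H⁺` leaves all of `H⁻` strictly below it, and every
line through two points of `H⁻` leaves all of `H⁺` strictly above it. -/
inductive IsHorton : List (ℝ × ℝ) → Prop where
  | small : ∀ l : List (ℝ × ℝ), l.length ≤ 2 → SortedX l → IsHorton l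
  | step : ∀ l : List (ℝ × ℝ), SortedX l → 3 ≤ l.length →
      IsHorton (everyOther l) → IsHorton (everyOther l.tail) →
      (∀ a ∈ everyOther l.tail, ∀ b ∈ everyOther l.tail, a ≠ b →
        ∀ p ∈ everyOther l, BelowLine a b p) →
      (∀ a ∈ everyOther l, ∀ b ∈ everyOther l, a ≠ b →
        ∀ p ∈ everyOther l.tail, AboveLine a b p) →
      IsHorton l

/-!
Every point of `H` strictly inside the triangle `a b c` is a point of `H⁻` strictly between `a`
and `b` in x-order. A point `p ∈ H⁺` cannot be inside: the line through `p` and `c` leaves `a` and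
`b` strictly below it, so the whole triangle lies in a closed half-plane whose boundary passes
through `p`. A point `p ∈ H⁻` left of `a` (right of `b`) cannot be inside either: `c` lies above
the line `p a` (`b p`), i.e. on the other side of that line than the interior of the triangle.
-/

/-- Twice the signed area of the triangle `u v q`: positive iff `q` lies to the left of the
directed line `u → v`. -/
def orient (u v q : ℝ × ℝ) : ℝ :=
  (v.1 - u.1) * (q.2 - u.2) - (v.2 - u.2) * (q.1 - u.1)

section Orient

variable {u v q : ℝ × ℝ}

@[simp] theorem orient_self_left (u q : ℝ × ℝ) : orient u u q = 0 := by unfold orient; ring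

@[simp] theorem orient_apply_left (u v : ℝ × ℝ) : orient u v u = 0 := by unfold orient; ring

@[simp] theorem orient_apply_right (u v : ℝ × ℝ) : orient u v v = 0 := by unfold orient; ring

theorem orient_rotate (u v q : ℝ × ℝ) : orient v q u = orient u v q := by unfold orient; ring

theorem orient_swap (u v q : ℝ × ℝ) : orient v u q = -orient u v q := by unfold orient; ring

theorem orient_eq_mul_sub_line (h : u.1 ≠ v.1) :
    orient u v q = (v.1 - u.1) * (q.2 - (u.2 + (v.2 - u.2) / (v.1 - u.1) * (q.1 - u.1))) := by
  have : v.1 - u.1 ≠ 0 := sub_ne_zero.2 h.symm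
  unfold orient; field_simp; ring

theorem AboveLine.orient_pos (hq : AboveLine u v q) (h : u.1 < v.1) : 0 < orient u v q := by
  rw [orient_eq_mul_sub_line h.ne]; exact mul_pos (sub_pos.2 h) (sub_pos.2 hq)

theorem BelowLine.orient_neg (hq : BelowLine u v q) (h : u.1 < v.1) : orient u v q < 0 := by
  rw [orient_eq_mul_sub_line h.ne]; exact mul_neg_of_pos_of_neg (sub_pos.2 h) (sub_neg.2 hq)

theorem BelowLine.orient_pos (hq : BelowLine u v q) (h : v.1 < u.1) : 0 < orient u v q := by
  rw [orient_eq_mul_sub_line h.ne']; exact mul_pos_of_neg_of_neg (sub_neg.2 h) (sub_neg.2 hq)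

/-- Up to the constant `ℓ u`, `orient u v` is a nonzero linear functional `ℓ`, hence an open map,
so it maps interior points of `{ℓ ≥ ℓ u}` into the open half-line. -/
theorem orient_pos_of_mem_interior_convexHull (huv : u ≠ v) {s : Set (ℝ × ℝ)}
    (hs : ∀ q ∈ s, 0 ≤ orient u v q) {p : ℝ × ℝ} (hp : p ∈ interior (convexHull ℝ s)) :
    0 < orient u v p := by
  set ℓ : StrongDual ℝ (ℝ × ℝ) :=
    (v.1 - u.1) • ContinuousLinearMap.snd ℝ ℝ ℝ - (v.2 - u.2) • ContinuousLinearMap.fst ℝ ℝ ℝ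
  have hℓ : ∀ q, orient u v q = ℓ q - ℓ u := fun q => by simp [ℓ, orient]; ring
  have hℓ0 : ℓ ≠ 0 := by
    intro h
    have h1 := congrArg (fun f : StrongDual ℝ (ℝ × ℝ) => f (1, 0)) h
    have h2 := congrArg (fun f : StrongDual ℝ (ℝ × ℝ) => f (0, 1)) h
    simp [ℓ, sub_eq_zero] at h1 h2
    exact huv (Prod.ext h2.symm h1)
  have hhull : convexHull ℝ s ⊆ ℓ ⁻¹' Set.Ici (ℓ u) :=
    convexHull_min (fun q hq => by simpa [hℓ, sub_nonneg] using hs q hq)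
      ((convex_Ici _).linear_preimage ℓ.toLinearMap)
  have hpℓ := (ℓ.isOpenMap_of_ne_zero hℓ0).interior_preimage_subset_preimage_interior
    (interior_mono hhull hp)
  rw [Set.mem_preimage, interior_Ici] at hpℓ
  rw [hℓ]; exact sub_pos.2 hpℓ

theorem orient_pos_of_mem_interior_triangle {a b c p : ℝ × ℝ} (h : 0 < orient a b c)
    (hp : p ∈ interior (convexHull ℝ {a, b, c})) :
    0 < orient a b p ∧ 0 < orient b c p ∧ 0 < orient c a p := by
  have edge : ∀ u v : ℝ × ℝ, u ≠ v → 0 ≤ orient u v a → 0 ≤ orient u v b →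
      0 ≤ orient u v c → 0 < orient u v p := by
    intro u v huv ha hb hc
    refine orient_pos_of_mem_interior_convexHull huv ?_ hp
    simp only [Set.mem_insert_iff, Set.mem_singleton_iff, forall_eq_or_imp, forall_eq]
    exact ⟨ha, hb, hc⟩
  have hbca : orient b c a = orient a b c := orient_rotate a b c
  have hcab : orient c a b = orient a b c := by rw [orient_rotate, hbca]
  refine ⟨edge a b ?_ (by simp) (by simp) h.le, edge b c ?_ (hbca ▸ h.le) (by simp) (by simp),
    edge c a ?_ (by simp) (hcab ▸ h.le) (by simp)⟩ <;> rintro rfl <;> simp at h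

end Orient

theorem everyOther_cons (a : ℝ × ℝ) (t : List (ℝ × ℝ)) :
    everyOther (a :: t) = a :: everyOther t.tail := by
  cases t <;> rfl

theorem everyOther_sublist : ∀ l : List (ℝ × ℝ), List.Sublist (everyOther l) l
  | [] => .slnil
  | [_] => .refl _
  | a :: b :: l => ((everyOther_sublist l).cons b).cons_cons a

theorem mem_of_mem_everyOther {l : List (ℝ × ℝ)} {p : ℝ × ℝ} (hp : p ∈ everyOther l) : p ∈ l :=
  (everyOther_sublist l).subset hp

theorem mem_of_mem_everyOther_tail {l : List (ℝ × ℝ)} {p : ℝ × ℝ} (hp : p ∈ everyOther l.tail) :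
    p ∈ l :=
  List.mem_of_mem_tail (mem_of_mem_everyOther hp)

theorem mem_everyOther_or_mem_everyOther_tail {p : ℝ × ℝ} :
    ∀ {l : List (ℝ × ℝ)}, p ∈ l → p ∈ everyOther l ∨ p ∈ everyOther l.tail
  | a :: t, hp => by
    rw [everyOther_cons, List.tail_cons, List.mem_cons]
    rcases List.mem_cons.1 hp with rfl | ht
    · exact Or.inl (Or.inl rfl)
    · exact (mem_everyOther_or_mem_everyOther_tail ht).symm.imp_left Or.inr

theorem eq_of_mem_everyOther_of_length_le_two {l : List (ℝ × ℝ)} (hl : l.length ≤ 2)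
    {p q : ℝ × ℝ} (hp : p ∈ everyOther l) (hq : q ∈ everyOther l) : p = q := by
  rcases l with _ | ⟨x, _ | ⟨y, _ | ⟨z, t⟩⟩⟩ <;> simp_all [everyOther]

theorem SortedX.eq_of_fst_eq {l : List (ℝ × ℝ)} (hl : SortedX l) {p q : ℝ × ℝ} (hp : p ∈ l)
    (hq : q ∈ l) (h : p.1 = q.1) : p = q := by
  by_contra hne
  have : Std.Symm (fun p q : ℝ × ℝ => p.1 ≠ q.1) := ⟨fun _ _ h => h.symm⟩
  exact (hl.imp ne_of_lt).forall hp hq hne h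

/-- The separation conditions that `IsHorton.step` imposes at the top level of the recursion;
short lists satisfy them vacuously. -/
structure HortonSeparated (l : List (ℝ × ℝ)) : Prop where
  sortedX : SortedX l
  below : ∀ a ∈ everyOther l.tail, ∀ b ∈ everyOther l.tail, a ≠ b →
    ∀ p ∈ everyOther l, BelowLine a b p
  above : ∀ a ∈ everyOther l, ∀ b ∈ everyOther l, a ≠ b →
    ∀ p ∈ everyOther l.tail, AboveLine a b p

theorem IsHorton.hortonSeparated {l : List (ℝ × ℝ)} (h : IsHorton l) : HortonSeparated l := by
  cases h with
  | small _ hlen hs =>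
    have hlen' : l.tail.length ≤ 2 := by rw [List.length_tail]; omega
    exact ⟨hs,
      fun a ha b hb hab => (hab (eq_of_mem_everyOther_of_length_le_two hlen' ha hb)).elim,
      fun a ha b hb hab => (hab (eq_of_mem_everyOther_of_length_le_two hlen ha hb)).elim⟩
  | step _ hs _ _ _ hbelow habove => exact ⟨hs, hbelow, habove⟩

namespace HortonSeparated

variable {l : List (ℝ × ℝ)} {a b c p : ℝ × ℝ}

theorem orient_pos (hl : HortonSeparated l) (ha : a ∈ everyOther l) (hb : b ∈ everyOther l)
    (hab : a.1 < b.1) (hc : c ∈ everyOther l.tail) : 0 < orient a b c :=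
  (hl.above a ha b hb (ne_of_apply_ne Prod.fst hab.ne) c hc).orient_pos hab

theorem notMem_interior_of_mem_everyOther_tail (hl : HortonSeparated l)
    (ha : a ∈ everyOther l) (hb : b ∈ everyOther l) (hab : a.1 < b.1) (hc : c ∈ everyOther l.tail)
    (hp : p ∈ everyOther l.tail) : p ∉ interior (convexHull ℝ {a, b, c}) := by
  intro hpI
  obtain ⟨-, hbc, hca⟩ := orient_pos_of_mem_interior_triangle (hl.orient_pos ha hb hab hc) hpI
  have hpc : p ≠ c := by rintro rfl; simp at hca
  have hpcx : p.1 ≠ c.1 :=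
    mt (hl.sortedX.eq_of_fst_eq (mem_of_mem_everyOther_tail hp)
      (mem_of_mem_everyOther_tail hc)) hpc
  rcases hpcx.lt_or_gt with h | h
  · have := (hl.below p hp c hc hpc a ha).orient_neg h
    linarith [orient_rotate p c a]
  · have := (hl.below p hp c hc hpc b hb).orient_pos h
    linarith [orient_rotate b p c, orient_swap c b p, orient_rotate c b p]

theorem fst_mem_Ioo_of_mem_interior (hl : HortonSeparated l)
    (ha : a ∈ everyOther l) (hb : b ∈ everyOther l) (hab : a.1 < b.1) (hc : c ∈ everyOther l.tail)
    (hp : p ∈ everyOther l) (hpI : p ∈ interior (convexHull ℝ {a, b, c})) :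
    p.1 ∈ Set.Ioo a.1 b.1 := by
  obtain ⟨-, hbc, hca⟩ := orient_pos_of_mem_interior_triangle (hl.orient_pos ha hb hab hc) hpI
  have hpl := mem_of_mem_everyOther hp
  constructor
  · rcases lt_trichotomy p.1 a.1 with h | h | h
    · have := (hl.above p hp a ha (ne_of_apply_ne Prod.fst h.ne) c hc).orient_pos h
      linarith [orient_rotate p a c, orient_swap c a p]
    · rw [hl.sortedX.eq_of_fst_eq hpl (mem_of_mem_everyOther ha) h] at hca; simp at hca
    · exact h
  · rcases lt_trichotomy p.1 b.1 with h | h | h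
    · exact h
    · rw [hl.sortedX.eq_of_fst_eq hpl (mem_of_mem_everyOther hb) h] at hbc; simp at hbc
    · have := (hl.above b hb p hp (ne_of_apply_ne Prod.fst h.ne) c hc).orient_pos h
      linarith [orient_rotate b p c, orient_swap c b p, orient_rotate c b p]

theorem triPts_le (hl : HortonSeparated l) (ha : a ∈ everyOther l) (hb : b ∈ everyOther l)
    (hab : a.1 < b.1) (hc : c ∈ everyOther l.tail) :
    triPts l.toFinset a b c ≤
      ((everyOther l).toFinset.filter (fun p => a.1 < p.1 ∧ p.1 < b.1)).card := by
  refine Finset.card_le_card fun p hp => ?_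
  simp only [Finset.mem_filter, List.mem_toFinset] at hp ⊢
  obtain ⟨hpl, hpI⟩ := hp
  rcases mem_everyOther_or_mem_everyOther_tail hpl with hp | hp
  · exact ⟨hp, hl.fst_mem_Ioo_of_mem_interior ha hb hab hc hp hpI⟩
  · exact (hl.notMem_interior_of_mem_everyOther_tail ha hb hab hc hp hpI).elim

end HortonSeparated

/-- If `a <ₓ b` are points of the odd part `H⁻ = everyOther l` of a Horton set `l`
with exactly one point of `H⁻` strictly between them in x-coordinate, then for any
point `c` of the even part `H⁺ = everyOther l.tail`, the triangle `a b c` contains at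
most 1 point of `l` in its interior. -/
theorem horton_skip_one_almost_empty (l : List (ℝ × ℝ)) (hH : IsHorton l)
    (a b c : ℝ × ℝ)
    (ha : a ∈ everyOther l) (hb : b ∈ everyOther l) (hab : a.1 < b.1)
    (hone : ((everyOther l).toFinset.filter (fun p => a.1 < p.1 ∧ p.1 < b.1)).card = 1)
    (hc : c ∈ everyOther l.tail) :
    triPts l.toFinset a b c ≤ 1 :=
  hone ▸ hH.hortonSeparated.triPts_le ha hb hab hc
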